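/- arXiv:1111.7295 — 2 statements merged into one kernel-verified Lean document; each statement's English description precedes it below -/
import Mathlib

section
/- Let h* ∈ ℝ^r be a nonnegative k-bucket histogram with ‖h*‖₁ = M and minimum bucket width Δ, and let r/b ≤ Δ where b divides r. Define h̄ ∈ ℝ^r by averaging h* over each of b consecutive equal-width blocks of width r/b (i.e., h̄ is constant on each block, equal to the mean of h* there). Then ‖h* − h̄‖₂ ≤ (M/Δ)·√(r/b). -/
private lemma mean_min {s : Finset ℕ} (f : ℕ → ℝ) (m c : ℝ)
    (hm : ∑ n ∈ s, f n = (s.card : ℝ) * m) :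
    ∑ n ∈ s, (f n - m) ^ 2 ≤ ∑ n ∈ s, (f n - c) ^ 2 := by
  have key : ∑ n ∈ s, (f n - c) ^ 2 - ∑ n ∈ s, (f n - m) ^ 2 = (s.card : ℝ) * (m - c) ^ 2 := by
    rw [← Finset.sum_sub_distrib]
    have h1 : ∀ n ∈ s, (f n - c) ^ 2 - (f n - m) ^ 2
        = (m - c) * (2 * f n) - (m - c) * (c + m) := by intro n _; ring
    rw [Finset.sum_congr rfl h1, Finset.sum_sub_distrib, ← Finset.mul_sum, ← Finset.mul_sum,
      Finset.sum_const, hm, nsmul_eq_mul]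
    ring
  have h2 : (0:ℝ) ≤ (s.card : ℝ) * (m - c) ^ 2 := by positivity
  linarith

/-- Averaging a nonnegative `k`-bucket histogram (total mass `M`, minimum bucket
width `Δ ≥ r/b`) over `b` equal-width blocks incurs L₂ error at most `(M/Δ)·√(r/b)`. -/
theorem block_average_error (r b k Δ : ℕ) (hb : 0 < b) (hdvd : b ∣ r) (hΔ : 0 < Δ)
    (hbΔ : r / b ≤ Δ) (M : ℝ) (h : Fin r → ℝ) (hpos : ∀ i, 0 ≤ h i)
    (u : ℕ → ℕ) (hu0 : u 0 = 0) (huk : u k = r)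
    (hmono : ∀ j < k, u j < u (j + 1))
    (hwidth : ∀ j < k, Δ ≤ u (j + 1) - u j)
    (hconst : ∀ j < k, ∀ i i' : Fin r, u j ≤ (i : ℕ) → (i : ℕ) < u (j + 1) →
      u j ≤ (i' : ℕ) → (i' : ℕ) < u (j + 1) → h i = h i')
    (hsum : ∑ i, h i = M)
    (hbar : Fin r → ℝ)
    (hbar_def : ∀ i : Fin r, hbar i =
      ((b : ℝ) / r) * ∑ i' ∈ Finset.univ.filter
        (fun i' : Fin r => (i' : ℕ) / (r / b) = (i : ℕ) / (r / b)), h i') :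
    Real.sqrt (∑ i, (h i - hbar i) ^ 2) ≤ (M / Δ) * Real.sqrt ((r : ℝ) / b) := by
  rcases Nat.eq_zero_or_pos r with hr | hr
  · subst hr
    simp
  have hM0 : 0 ≤ M := by rw [← hsum]; exact Finset.sum_nonneg fun i _ => hpos i
  obtain ⟨w, hrw'⟩ := hdvd
  have hwdef : r / b = w := by rw [hrw', Nat.mul_div_cancel_left _ hb]
  rw [hwdef] at hbΔ
  simp only [hwdef] at hbar_def
  have hrw : b * w = r := hrw'.symm
  have hwpos : 0 < w := by
    rcases Nat.eq_zero_or_pos w with h0 | h0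
    · rw [h0, mul_zero] at hrw; omega
    · exact h0
  have hkpos : 0 < k := by
    rcases Nat.eq_zero_or_pos k with h0 | h0
    · rw [h0, hu0] at huk; omega
    · exact h0
  -- monotonicity of u
  have umono : ∀ j j', j ≤ j' → j' ≤ k → u j ≤ u j' := by
    intro j j' hjj' hj'k
    induction j' with
    | zero => have : j = 0 := by omega
              rw [this]
    | succ d ih =>
      rcases Nat.le_succ_iff.mp hjj' with hle | heq
      · exact le_trans (ih hle (by omega)) (le_of_lt (hmono d (by omega)))
      · rw [heq]
  have hujr : ∀ j, j < k → u j < r :=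
    fun j hj => lt_of_lt_of_le (hmono j hj) (le_of_le_of_eq (umono (j+1) k hj (le_refl k)) huk)
  have huj1r : ∀ j, j < k → u (j+1) ≤ r :=
    fun j hj => le_of_le_of_eq (umono (j+1) k hj (le_refl k)) huk
  -- piece values
  set c : ℕ → ℝ := fun j => if hj : u j < r then h ⟨u j, hj⟩ else 0 with hcdef
  have hc0 : ∀ j, 0 ≤ c j := by
    intro j; simp only [c]; split
    · exact hpos _
    · exact le_refl 0
  have hck : c k = 0 := by simp [c, huk]
  have hcval : ∀ j, j < k → ∀ n, ∀ hn : n < r, u j ≤ n → n < u (j+1) → h ⟨n, hn⟩ = c j := by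
    intro j hj n hn h1 h2
    have hur : u j < r := hujr j hj
    simp only [c, dif_pos hur]
    exact hconst j hj ⟨n,hn⟩ ⟨u j, hur⟩ h1 h2 (le_refl _) (hmono j hj)
  -- values on ℕ
  set g : ℕ → ℝ := fun n => if hn : n < r then h ⟨n, hn⟩ else 0 with hgdef
  have hg0 : ∀ n, 0 ≤ g n := by
    intro n; simp only [g]; split
    · exact hpos _
    · exact le_refl 0
  have hgval : ∀ j, j < k → ∀ n, u j ≤ n → n < u (j+1) → g n = c j := by
    intro j hj n h1 h2
    have hn : n < r := lt_of_lt_of_le h2 (huj1r j hj)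
    simp only [g, dif_pos hn]
    exact hcval j hj n hn h1 h2
  -- piece index
  set J : ℕ → ℕ := fun n => Nat.findGreatest (fun j => u j ≤ n) k with hJdef
  have hJ : ∀ n, n < r → J n < k ∧ u (J n) ≤ n ∧ n < u (J n + 1) := by
    intro n hn
    have hspec : u (J n) ≤ n :=
      Nat.findGreatest_spec (P := fun j => u j ≤ n) (Nat.zero_le k) (by simp [hu0])
    have hJk : J n ≤ k := Nat.findGreatest_le k
    have hJlt : J n < k := by
      rcases eq_or_lt_of_le hJk with he | hl
      · rw [he, huk] at hspec; omega
      · exact hl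
    refine ⟨hJlt, hspec, ?_⟩
    by_contra hcon
    push_neg at hcon
    have h5 : J n + 1 ≤ J n :=
      Nat.le_findGreatest (P := fun j => u j ≤ n) (by omega : J n + 1 ≤ k) hcon
    omega
  -- total mass over pieces
  have hsum_g : ∑ n ∈ Finset.range r, g n = M := by
    rw [← hsum, ← Fin.sum_univ_eq_sum_range g r]
    exact Finset.sum_congr rfl (fun i _ => by simp only [g, dif_pos i.isLt])
  set P : ℕ → Finset ℕ := fun j => Finset.Ico (u j) (u (j+1)) with hPdef
  have hcoverP : Finset.range r = (Finset.range k).biUnion P := by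
    ext n
    simp only [Finset.mem_range, Finset.mem_biUnion, Finset.mem_Ico, P]
    constructor
    · intro hn; exact ⟨J n, (hJ n hn).1, (hJ n hn).2.1, (hJ n hn).2.2⟩
    · rintro ⟨j, hj, _, h2⟩
      exact lt_of_lt_of_le h2 (huj1r j hj)
  have hdisjP : Set.PairwiseDisjoint ↑(Finset.range k) P := by
    intro j hj j' hj' hne
    simp only [Finset.coe_range, Set.mem_Iio] at hj hj'
    show Disjoint (P j) (P j')
    rw [Finset.disjoint_left]
    intro n hn hn'
    simp only [P, Finset.mem_Ico] at hn hn'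
    rcases lt_or_gt_of_ne hne with hlt | hlt
    · have := umono (j+1) j' hlt (le_of_lt hj'); omega
    · have := umono (j'+1) j hlt (le_of_lt hj); omega
  have hMc : (Δ : ℝ) * ∑ j ∈ Finset.range k, c j ≤ M := by
    rw [← hsum_g, hcoverP, Finset.sum_biUnion hdisjP, Finset.mul_sum]
    apply Finset.sum_le_sum
    intro j hj
    simp only [Finset.mem_range] at hj
    have hPsum : ∑ n ∈ P j, g n = ((u (j+1) - u j : ℕ) : ℝ) * c j := by
      rw [Finset.sum_congr rfl (fun n hn => by
        simp only [P, Finset.mem_Ico] at hn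
        exact hgval j hj n hn.1 hn.2)]
      rw [Finset.sum_const, Nat.card_Ico, nsmul_eq_mul]
    rw [hPsum]
    apply mul_le_mul_of_nonneg_right _ (hc0 j)
    exact_mod_cast hwidth j hj
  -- blocks
  set B : ℕ → Finset ℕ := fun t => Finset.Ico (t * w) (t * w + w) with hBdef
  have hBsub : ∀ t, t < b → t * w + w ≤ r := by
    intro t ht
    have h1 : (t+1) * w ≤ b * w := Nat.mul_le_mul_right w ht
    have h2 : t * w + w = (t+1)*w := by ring
    omega
  have hcard : ∀ t, (B t).card = w := by
    intro t; simp [B]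
  have hdiv : ∀ t, ∀ n ∈ B t, n / w = t := by
    intro t n hn
    simp only [B, Finset.mem_Ico] at hn
    exact Nat.div_eq_of_lt_le hn.1 (by have : (t+1)*w = t*w + w := by ring
                                       omega)
  have hdivmem : ∀ n, n < r → n / w < b ∧ n ∈ B (n / w) := by
    intro n hn
    constructor
    · rw [Nat.div_lt_iff_lt_mul hwpos]
      omega
    · simp only [B, Finset.mem_Ico]
      exact ⟨Nat.div_mul_le_self n w, Nat.lt_div_mul_add hwpos⟩
  have hcoverB : Finset.range r = (Finset.range b).biUnion B := by
    ext n
    simp only [Finset.mem_range, Finset.mem_biUnion]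
    constructor
    · intro hn; exact ⟨n / w, (hdivmem n hn).1, (hdivmem n hn).2⟩
    · rintro ⟨t, ht, hnt⟩
      have := hBsub t ht
      simp only [B, Finset.mem_Ico] at hnt
      omega
  have hdisjB : Set.PairwiseDisjoint ↑(Finset.range b) B := by
    intro t ht t' ht' hne
    show Disjoint (B t) (B t')
    rw [Finset.disjoint_left]
    intro n hn hn'
    have h1 := hdiv t n hn
    have h2 := hdiv t' n hn'
    exact hne (by omega)
  -- block averages
  set bar : ℕ → ℝ := fun t => (∑ n ∈ B t, g n) / w with hbardef
  have hrcast : (r : ℝ) = (b : ℝ) * (w : ℝ) := by exact_mod_cast hrw.symm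
  have hbar_eq : ∀ i : Fin r, hbar i = bar ((i : ℕ) / w) := by
    intro i
    rw [hbar_def i]
    have ht : (i : ℕ) / w < b := (hdivmem i i.isLt).1
    have hfil : ∑ i' ∈ Finset.univ.filter
        (fun i' : Fin r => (i' : ℕ) / w = (i : ℕ) / w), h i'
        = ∑ n ∈ B ((i : ℕ) / w), g n := by
      rw [Finset.sum_filter]
      rw [show (fun i' : Fin r => if (i' : ℕ) / w = (i : ℕ) / w then h i' else 0)
          = (fun i' : Fin r => if ((i' : ℕ)) / w = (i : ℕ) / w then g (i' : ℕ) else 0) from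
        funext fun i' => by simp only [g, dif_pos i'.isLt]]
      rw [Fin.sum_univ_eq_sum_range (fun n => if n / w = (i : ℕ) / w then g n else 0) r]
      rw [← Finset.sum_filter]
      congr 1
      ext n
      simp only [Finset.mem_filter, Finset.mem_range, B, Finset.mem_Ico]
      constructor
      · rintro ⟨hn, hq⟩
        rw [← hq]
        exact ⟨Nat.div_mul_le_self n w, Nat.lt_div_mul_add hwpos⟩
      · intro hn
        have hnr : n < r := by have := hBsub _ ht; omega
        refine ⟨hnr, ?_⟩
        exact hdiv _ n (by simp only [B, Finset.mem_Ico]; exact hn)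
    rw [hfil]
    simp only [bar]
    rw [hrcast]
    have hb0 : (b:ℝ) ≠ 0 := Nat.cast_ne_zero.mpr (by omega)
    have hw0 : (w:ℝ) ≠ 0 := Nat.cast_ne_zero.mpr (by omega)
    field_simp
  -- per block bound
  set e : ℕ → ℝ := fun j => (c j - c (j+1))^2 with hedef
  set JT : ℕ → ℕ := fun t => J (t * w) with hJTdef
  set δ : ℕ → ℝ := fun t => if u (JT t + 1) < t*w + w then e (JT t) else 0 with hδdef
  have hJTfacts : ∀ t, t < b → JT t < k ∧ u (JT t) ≤ t*w ∧ t*w < u (JT t + 1) := by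
    intro t ht
    have htw : t * w < r := by have := hBsub t ht; omega
    exact hJ (t*w) htw
  have hblock : ∀ t ∈ Finset.range b, ∑ n ∈ B t, (g n - bar t)^2 ≤ (w:ℝ)/4 * δ t := by
    intro t ht
    rw [Finset.mem_range] at ht
    obtain ⟨hJk, hJle, hJlt⟩ := hJTfacts t ht
    by_cases hcase : u (JT t + 1) < t*w + w
    · -- crossing block
      have hj1k : JT t + 1 < k := by
        by_contra hcon
        have he : JT t + 1 = k := by omega
        have h1 : u (JT t + 1) = r := by rw [he, huk]
        have := hBsub t ht
        omega
      have hval : ∀ n ∈ B t, g n = c (JT t) ∨ g n = c (JT t + 1) := by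
        intro n hn
        simp only [B, Finset.mem_Ico] at hn
        by_cases h2 : n < u (JT t + 1)
        · left; exact hgval (JT t) hJk n (le_trans hJle hn.1) h2
        · right
          push_neg at h2
          apply hgval (JT t + 1) hj1k n h2
          have hw1 : Δ ≤ u (JT t + 1 + 1) - u (JT t + 1) := hwidth (JT t + 1) hj1k
          have hw2 : u (JT t + 1) < u (JT t + 1 + 1) := hmono (JT t + 1) hj1k
          have hwΔ : w ≤ Δ := hbΔ
          have hJlt' : t * w < u (JT t + 1) := hJlt
          omega
      have hmean : ∑ n ∈ B t, g n = ((B t).card : ℝ) * bar t := by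
        rw [hcard t]
        simp only [bar]
        have hw0 : (w:ℝ) ≠ 0 := Nat.cast_ne_zero.mpr (by omega)
        field_simp
      have key := mean_min g (bar t) ((c (JT t) + c (JT t + 1))/2) hmean
      calc ∑ n ∈ B t, (g n - bar t)^2
          ≤ ∑ n ∈ B t, (g n - (c (JT t) + c (JT t + 1))/2)^2 := key
        _ = ∑ n ∈ B t, (c (JT t) - c (JT t + 1))^2/4 := by
            apply Finset.sum_congr rfl
            intro n hn
            rcases hval n hn with hv | hv <;> rw [hv] <;> ring
        _ = (w:ℝ)/4 * δ t := by
            rw [Finset.sum_const, hcard t, nsmul_eq_mul]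
            simp only [δ, if_pos hcase, e]
            ring
    · -- pure block
      push_neg at hcase
      have hval : ∀ n ∈ B t, g n = c (JT t) := by
        intro n hn
        simp only [B, Finset.mem_Ico] at hn
        exact hgval (JT t) hJk n (le_trans hJle hn.1) (lt_of_lt_of_le hn.2 hcase)
      have hbart : bar t = c (JT t) := by
        simp only [bar]
        rw [Finset.sum_congr rfl hval, Finset.sum_const, hcard t, nsmul_eq_mul]
        have hw0 : (w:ℝ) ≠ 0 := Nat.cast_ne_zero.mpr (by omega)
        field_simp
      have hzero : ∑ n ∈ B t, (g n - bar t)^2 = 0 :=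
        Finset.sum_eq_zero fun n hn => by rw [hval n hn, hbart]; ring
      rw [hzero]
      simp only [δ, if_neg (not_lt.mpr hcase)]
      simp
  -- main inequality
  have hmain : ∑ i : Fin r, (h i - hbar i)^2
      ≤ (w:ℝ)/4 * ∑ j ∈ Finset.range k, e j := by
    have h1 : ∑ i : Fin r, (h i - hbar i)^2
        = ∑ n ∈ Finset.range r, (g n - bar (n / w))^2 := by
      rw [← Fin.sum_univ_eq_sum_range (fun n => (g n - bar (n/w))^2) r]
      exact Finset.sum_congr rfl (fun i _ => by rw [hbar_eq i]; simp only [g, dif_pos i.isLt])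
    rw [h1, hcoverB, Finset.sum_biUnion hdisjB]
    have h2 : ∀ t ∈ Finset.range b, ∑ n ∈ B t, (g n - bar (n/w))^2
        = ∑ n ∈ B t, (g n - bar t)^2 :=
      fun t ht => Finset.sum_congr rfl fun n hn => by rw [hdiv t n hn]
    rw [Finset.sum_congr rfl h2]
    calc ∑ t ∈ Finset.range b, ∑ n ∈ B t, (g n - bar t)^2
        ≤ ∑ t ∈ Finset.range b, (w:ℝ)/4 * δ t := Finset.sum_le_sum hblock
      _ = (w:ℝ)/4 * ∑ t ∈ Finset.range b, δ t := by rw [Finset.mul_sum]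
      _ ≤ (w:ℝ)/4 * ∑ j ∈ Finset.range k, e j := by
          apply mul_le_mul_of_nonneg_left _ (by positivity)
          have hδfil : ∑ t ∈ Finset.range b, δ t
              = ∑ t ∈ (Finset.range b).filter (fun t => u (JT t + 1) < t*w + w), e (JT t) := by
            rw [Finset.sum_filter]
          rw [hδfil]
          have hinj : ∀ t ∈ (Finset.range b).filter (fun t => u (JT t + 1) < t*w + w),
              ∀ t' ∈ (Finset.range b).filter (fun t => u (JT t + 1) < t*w + w),
              JT t = JT t' → t = t' := by
            intro t ht t' ht' heq
            simp only [Finset.mem_filter, Finset.mem_range] at ht ht'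
            have h1 := (hJTfacts t ht.1).2.2
            have h2 := (hJTfacts t' ht'.1).2.2
            have h3 : u (JT t + 1) / w = t :=
              hdiv t _ (by simp only [B, Finset.mem_Ico]; omega)
            have h4 : u (JT t' + 1) / w = t' :=
              hdiv t' _ (by simp only [B, Finset.mem_Ico]; omega)
            rw [← h3, ← h4, heq]
          rw [← Finset.sum_image hinj]
          apply Finset.sum_le_sum_of_subset_of_nonneg
          · intro j hj
            simp only [Finset.mem_image, Finset.mem_filter, Finset.mem_range] at hj
            obtain ⟨t, ⟨ht, _⟩, rfl⟩ := hj
            exact Finset.mem_range.mpr (hJTfacts t ht).1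
          · intro j _ _
            simp only [e]
            positivity
  -- bound the total variation sum
  have hSc : ∑ j ∈ Finset.range k, c j ≤ M / Δ := by
    rw [le_div_iff₀ (by positivity : (0:ℝ) < (Δ:ℝ))]
    linarith [hMc]
  have habs : ∑ j ∈ Finset.range k, |c j - c (j+1)| ≤ 2 * (M / Δ) := by
    calc ∑ j ∈ Finset.range k, |c j - c (j+1)|
        ≤ ∑ j ∈ Finset.range k, (c j + c (j+1)) := by
          apply Finset.sum_le_sum
          intro j _
          calc |c j - c (j+1)| ≤ |c j| + |c (j+1)| := abs_sub _ _
            _ = c j + c (j+1) := by rw [abs_of_nonneg (hc0 j), abs_of_nonneg (hc0 (j+1))]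
      _ = ∑ j ∈ Finset.range k, c j + ∑ j ∈ Finset.range k, c (j+1) :=
          Finset.sum_add_distrib
      _ ≤ 2 * (M / Δ) := by
          have hshift : ∑ j ∈ Finset.range k, c (j+1)
              = ∑ j ∈ Finset.range (k+1), c j - c 0 := by
            rw [Finset.sum_range_succ']; ring
          have hsucc : ∑ j ∈ Finset.range (k+1), c j
              = ∑ j ∈ Finset.range k, c j + c k := Finset.sum_range_succ _ _
          rw [hshift, hsucc, hck]
          linarith [hc0 0, hSc]
  have hS : ∑ j ∈ Finset.range k, e j ≤ (2 * (M / Δ))^2 := by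
    calc ∑ j ∈ Finset.range k, e j
        = ∑ j ∈ Finset.range k, |c j - c (j+1)|^2 := by
          apply Finset.sum_congr rfl
          intro j _
          simp only [e]
          rw [sq_abs]
      _ ≤ (∑ j ∈ Finset.range k, |c j - c (j+1)|)^2 :=
          Finset.sum_sq_le_sq_sum_of_nonneg fun j _ => abs_nonneg _
      _ ≤ (2 * (M / Δ))^2 := by
          apply pow_le_pow_left₀ (Finset.sum_nonneg fun j _ => abs_nonneg _) habs
  have hfinal : ∑ i : Fin r, (h i - hbar i)^2 ≤ (M/Δ)^2 * w := by
    calc ∑ i : Fin r, (h i - hbar i)^2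
        ≤ (w:ℝ)/4 * ∑ j ∈ Finset.range k, e j := hmain
      _ ≤ (w:ℝ)/4 * (2 * (M / Δ))^2 := by
          apply mul_le_mul_of_nonneg_left hS (by positivity)
      _ = (M/Δ)^2 * w := by ring
  have hw_eq : (r : ℝ) / b = (w : ℝ) := by
    rw [hrcast]
    have hb0 : (b:ℝ) ≠ 0 := Nat.cast_ne_zero.mpr (by omega)
    field_simp
  rw [hw_eq]
  have hMΔ : 0 ≤ M / (Δ:ℝ) := div_nonneg hM0 (by positivity)
  calc Real.sqrt (∑ i : Fin r, (h i - hbar i)^2)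
      ≤ Real.sqrt ((M/Δ)^2 * w) := Real.sqrt_le_sqrt hfinal
    _ = (M/Δ) * Real.sqrt w := by
        rw [Real.sqrt_mul (sq_nonneg _), Real.sqrt_sq hMΔ]
end

section
/- Let h* ∈ ℝ^r be nonnegative and k-piecewise constant with ‖h*‖₁ = M and minimum piece width Δ, let r/b ≤ Δ, and let h̄ be the block-average of h* over b equal blocks. Then the sum, over the at most (k−1) blocks straddling piece boundaries, of Σ_{i in block} (h*_i − h̄_i)² is at most (r/b)·(M/Δ)·(M/Δ); in particular ‖h* − h̄‖₂² ≤ (r/b)·M²/Δ². -/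
lemma my_div_eq_iff (w t n : ℕ) (hw : 0 < w) : n / w = t ↔ t*w ≤ n ∧ n < t*w + w := by
  constructor
  · rintro rfl
    have h1 := Nat.div_add_mod n w
    have h2 := Nat.mod_lt n hw
    have hc : w*(n/w) = (n/w)*w := Nat.mul_comm _ _
    omega
  · rintro ⟨h1, h2⟩
    have hq1 : (n/w)*w ≤ n := Nat.div_mul_le_self n w
    have hq0 := Nat.div_add_mod n w
    have h2' := Nat.mod_lt n hw
    have hc : w*(n/w) = (n/w)*w := Nat.mul_comm _ _
    rcases lt_trichotomy (n/w) t with hlt | heq | hgt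
    · have : ((n/w)+1)*w ≤ t*w := Nat.mul_le_mul_right w (by omega)
      have he : ((n/w)+1)*w = (n/w)*w + w := by ring
      omega
    · exact heq
    · have : (t+1)*w ≤ (n/w)*w := Nat.mul_le_mul_right w (by omega)
      have he : (t+1)*w = t*w + w := by ring
      omega

lemma my_sum_consecutive (f : ℕ → ℝ) (g : ℕ → ℕ) (hg0 : g 0 = 0) :
    ∀ K, (∀ j < K, g j ≤ g (j+1)) →
    ∑ n ∈ Finset.range (g K), f n = ∑ j ∈ Finset.range K, ∑ n ∈ Finset.Ico (g j) (g (j+1)), f n := by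
  intro K
  induction K with
  | zero => simp [hg0]
  | succ K ih =>
    intro hg
    rw [Finset.sum_range_succ, ← ih (fun j hj => hg j (by omega))]
    rw [Finset.range_eq_Ico, Finset.range_eq_Ico]
    exact (Finset.sum_Ico_consecutive f (Nat.zero_le _) (hg K (by omega))).symm

lemma my_sum_sq_le_sq_sum (s : Finset ℕ) (x : ℕ → ℝ) (hx : ∀ i ∈ s, 0 ≤ x i) :
    ∑ i ∈ s, (x i)^2 ≤ (∑ i ∈ s, x i)^2 := by
  have h1 : ∀ i ∈ s, (x i)^2 ≤ x i * ∑ j ∈ s, x j := by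
    intro i hi
    rw [sq]
    exact mul_le_mul_of_nonneg_left (Finset.single_le_sum hx hi) (hx i hi)
  calc ∑ i ∈ s, (x i)^2 ≤ ∑ i ∈ s, x i * ∑ j ∈ s, x j := Finset.sum_le_sum h1
    _ = (∑ i ∈ s, x i)^2 := by rw [← Finset.sum_mul, sq]

lemma my_block_var (s : Finset ℕ) (f : ℕ → ℝ) (a c mean : ℝ)
    (hsum : ∑ n ∈ s, f n = s.card * mean)
    (hprod : ∀ n ∈ s, (f n - a) * (f n - c) = 0) :
    ∑ n ∈ s, (f n - mean)^2 ≤ s.card * (a - c)^2 / 4 := by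
  have h1 : ∑ n ∈ s, (f n - mean)^2 = ∑ n ∈ s, ((a+c-2*mean) * f n + (mean^2 - a*c)) :=
    Finset.sum_congr rfl (fun n hn => by linear_combination hprod n hn)
  rw [h1, Finset.sum_add_distrib, ← Finset.mul_sum, hsum, Finset.sum_const, nsmul_eq_mul]
  have hq : (0:ℝ) ≤ s.card := Nat.cast_nonneg _
  nlinarith [mul_nonneg hq (sq_nonneg ((a+c)/2 - mean))]

theorem aux_block_avg (w k Δ b : ℕ) (hw : 0 < w) (hΔ : 0 < Δ) (hbΔ : w ≤ Δ) (hk : 0 < k)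
    (M : ℝ) (H : ℕ → ℝ) (Hpos : ∀ n, 0 ≤ H n)
    (u : ℕ → ℕ) (hu0 : u 0 = 0) (huk : u k = b*w)
    (hmono : ∀ j < k, u j < u (j+1))
    (hwidth : ∀ j < k, Δ ≤ u (j+1) - u j)
    (hconst : ∀ j < k, ∀ n n' : ℕ, u j ≤ n → n < u (j+1) → u j ≤ n' → n' < u (j+1) → H n = H n')
    (hsum : ∑ n ∈ Finset.range (b*w), H n = M)
    (m : ℕ → ℝ)
    (hm : ∀ t, (w:ℝ) * m t = ∑ n ∈ Finset.Ico (t*w) (t*w+w), H n) :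
    ∑ t ∈ Finset.range b, ∑ n ∈ Finset.Ico (t*w) (t*w+w), (H n - m t)^2
      ≤ (w:ℝ) * M^2 / Δ^2 := by
  classical
  -- monotonicity of u
  have umono : ∀ j' ≤ k, ∀ j ≤ j', u j ≤ u j' := by
    intro j'
    induction j' with
    | zero =>
      intro _ j hj
      have hj0 : j = 0 := by omega
      exact le_of_eq (congrArg u hj0)
    | succ n ih =>
      intro hn j hj
      rcases (by omega : j ≤ n ∨ j = n + 1) with h1 | h1
      · exact le_trans (ih (by omega) j h1) (le_of_lt (hmono n (by omega)))
      · simp [h1]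
  -- piece index function
  set P : ℕ → ℕ := fun n => Nat.findGreatest (fun j => u j ≤ n) k with hP
  have hPle : ∀ n, P n ≤ k := fun n => Nat.findGreatest_le k
  have hPspec : ∀ n, u (P n) ≤ n := fun n =>
    Nat.findGreatest_spec (P := fun j => u j ≤ n) (Nat.zero_le k) (by simp [hu0])
  have hPlt : ∀ n, n < b*w → P n < k := by
    intro n hn
    by_contra hc
    have h1 : P n = k := le_antisymm (hPle n) (by omega)
    have h2 := hPspec n
    rw [h1, huk] at h2
    omega
  have hPup : ∀ n, n < b*w → n < u (P n + 1) := by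
    intro n hn
    have h1 : P n < k := hPlt n hn
    have h2 := Nat.findGreatest_is_greatest (show P n < P n + 1 by omega) (by omega :  P n + 1 ≤ k)
    simpa using h2
  have hPmono : ∀ n n', n ≤ n' → P n ≤ P n' := by
    intro n n' hnn
    exact Nat.le_findGreatest (hPle n) (le_trans (hPspec n) hnn)
  -- values
  set v : ℕ → ℝ := fun j => H (u j) with hv
  have hHv : ∀ n, n < b*w → H n = v (P n) := by
    intro n hn
    have h1 : P n < k := hPlt n hn
    exact hconst (P n) h1 n (u (P n)) (hPspec n) (hPup n hn) (le_refl _) (hmono _ h1)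
  have hv0 : ∀ j, 0 ≤ v j := fun j => Hpos _
  -- piece decomposition of the total mass
  have hpieces : ∑ n ∈ Finset.range (b*w), H n
      = ∑ j ∈ Finset.range k, ∑ n ∈ Finset.Ico (u j) (u (j+1)), H n := by
    rw [← huk]
    exact my_sum_consecutive H u hu0 k (fun j hj => le_of_lt (hmono j hj))
  have hpieceval : ∀ j < k, ∑ n ∈ Finset.Ico (u j) (u (j+1)), H n
      = ((u (j+1) - u j : ℕ) : ℝ) * v j := by
    intro j hj
    have h1 : ∀ n ∈ Finset.Ico (u j) (u (j+1)), H n = v j := by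
      intro n hn
      rw [Finset.mem_Ico] at hn
      exact hconst j hj n (u j) hn.1 hn.2 (le_refl _) (hmono j hj)
    rw [Finset.sum_congr rfl h1, Finset.sum_const, Nat.card_Ico, nsmul_eq_mul]
  set V : ℝ := ∑ j ∈ Finset.range k, v j with hV
  have hV0 : 0 ≤ V := Finset.sum_nonneg (fun j _ => hv0 j)
  have hΔV : (Δ:ℝ) * V ≤ M := by
    rw [← hsum, hpieces, hV, Finset.mul_sum]
    apply Finset.sum_le_sum
    intro j hj
    rw [Finset.mem_range] at hj
    rw [hpieceval j hj]
    apply mul_le_mul_of_nonneg_right _ (hv0 j)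
    exact_mod_cast hwidth j hj
  -- block endpoints
  set A : ℕ → ℝ := fun t => H (t*w) with hA
  set C : ℕ → ℝ := fun t => H (t*w + (w-1)) with hC
  have hlastlt : ∀ t, t < b → t*w + (w-1) < b*w := by
    intro t ht
    have : (t+1)*w ≤ b*w := Nat.mul_le_mul_right w (by omega)
    have he : (t+1)*w = t*w + w := by ring
    omega
  have hfirstlt : ∀ t, t < b → t*w < b*w := by
    intro t ht; have := hlastlt t ht; omega
  -- each block takes at most the two endpoint values
  have claim1 : ∀ t, t < b → ∀ n ∈ Finset.Ico (t*w) (t*w+w),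
      (H n - A t) * (H n - C t) = 0 := by
    intro t ht n hn
    rw [Finset.mem_Ico] at hn
    have hnlt : n < b*w := by have := hlastlt t ht; omega
    have hja : P (t*w) ≤ P n := hPmono _ _ hn.1
    have hjc : P n ≤ P (t*w + (w-1)) := hPmono _ _ (by omega)
    rcases eq_or_lt_of_le hja with h1 | h1
    · have : H n = A t := by
        rw [hHv n hnlt, ← h1]; exact (hHv (t*w) (hfirstlt t ht)).symm
      rw [this]; ring
    rcases eq_or_lt_of_le hjc with h2 | h2
    · have : H n = C t := by
        rw [hHv n hnlt, h2]; exact (hHv (t*w + (w-1)) (hlastlt t ht)).symm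
      rw [this]; ring
    -- middle piece would be too narrow
    exfalso
    have hup1 : t*w < u (P (t*w) + 1) := hPup (t*w) (hfirstlt t ht)
    have hu1 : u (P (t*w) + 1) ≤ u (P n) :=
      umono (P n) (hPle n) (P (t*w) + 1) (by omega)
    have hu2 : u (P n + 1) ≤ u (P (t*w + (w-1))) :=
      umono (P (t*w + (w-1))) (hPle _) (P n + 1) (by omega)
    have hu3 : u (P (t*w + (w-1))) ≤ t*w + (w-1) := hPspec _
    have hPnk : P n < k := hPlt n hnlt
    have hwid := hwidth (P n) hPnk
    omega
  -- per-block variance bound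
  have key : ∀ t, t < b → ∑ n ∈ Finset.Ico (t*w) (t*w+w), (H n - m t)^2
      ≤ (w:ℝ) * (A t - C t)^2 / 4 := by
    intro t ht
    have hcard : (Finset.Ico (t*w) (t*w+w)).card = w := by rw [Nat.card_Ico]; omega
    have hs : ∑ n ∈ Finset.Ico (t*w) (t*w+w), H n
        = ((Finset.Ico (t*w) (t*w+w)).card : ℝ) * m t := by
      rw [hcard, ← hm t]
    have := my_block_var (Finset.Ico (t*w) (t*w+w)) H (A t) (C t) (m t) hs (claim1 t ht)
    rwa [hcard] at this
  -- straddling blocks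
  set S : Finset ℕ := (Finset.range b).filter (fun t => A t ≠ C t) with hS
  set J : ℕ → ℕ := fun t => P (t*w + (w-1)) with hJ
  have hstrad : ∀ t ∈ S, J t < k ∧ 1 ≤ J t ∧ A t = v (J t - 1) ∧ C t = v (J t)
      ∧ t*w < u (J t) ∧ u (J t) ≤ t*w + (w-1) := by
    intro t htS
    rw [hS, Finset.mem_filter, Finset.mem_range] at htS
    obtain ⟨ht, hne⟩ := htS
    have hlast := hlastlt t ht
    have hfirst := hfirstlt t ht
    have hjck : J t < k := hPlt _ hlast
    have hja : P (t*w) ≤ J t := hPmono _ _ (by omega)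
    have e1 : A t = v (P (t*w)) := hHv (t*w) hfirst
    have e2 : C t = v (J t) := hHv _ hlast
    have hane : P (t*w) ≠ J t := by
      intro he
      exact hne (by rw [e1, he, ← e2])
    have hup1 : t*w < u (P (t*w) + 1) := hPup _ hfirst
    have hstep : J t = P (t*w) + 1 := by
      by_contra hcon
      have h2 : P (t*w) + 2 ≤ J t := by omega
      have hu1 : u (P (t*w) + 2) ≤ u (J t) := umono (J t) (hPle _) _ (by omega)
      have hu3 : u (J t) ≤ t*w + (w-1) := hPspec _
      have hwid := hwidth (P (t*w) + 1) (by omega)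
      have hnorm : P (t*w) + 1 + 1 = P (t*w) + 2 := rfl
      rw [hnorm] at hwid
      omega
    refine ⟨hjck, by omega, ?_, e2, ?_, hPspec _⟩
    · rw [e1]; congr 1; omega
    · rw [hstep]; exact hup1
  have hinj : ∀ t ∈ S, ∀ t' ∈ S, J t = J t' → t = t' := by
    intro t ht t' ht' he
    obtain ⟨_,_,_,_,hl,hr⟩ := hstrad t ht
    obtain ⟨_,_,_,_,hl',hr'⟩ := hstrad t' ht'
    by_contra hnett
    rcases lt_or_gt_of_ne hnett with hlt | hlt
    · have h1 : (t+1)*w ≤ t'*w := Nat.mul_le_mul_right w (by omega)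
      have h2 : (t+1)*w = t*w + w := by ring
      rw [he] at hl hr
      omega
    · have h1 : (t'+1)*w ≤ t*w := Nat.mul_le_mul_right w (by omega)
      have h2 : (t'+1)*w = t'*w + w := by ring
      rw [← he] at hl' hr'
      omega
  have hinj' : ∀ t ∈ S, ∀ t' ∈ S, J t - 1 = J t' - 1 → t = t' := by
    intro t ht t' ht' he
    obtain ⟨_,h1,_,_,_,_⟩ := hstrad t ht
    obtain ⟨_,h1',_,_,_,_⟩ := hstrad t' ht'
    exact hinj t ht t' ht' (by omega)
  have hsum1 : ∑ t ∈ S, v (J t) ≤ V := by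
    rw [← Finset.sum_image hinj, hV]
    apply Finset.sum_le_sum_of_subset_of_nonneg
    · intro j hj
      rw [Finset.mem_image] at hj
      obtain ⟨t, htS, rfl⟩ := hj
      rw [Finset.mem_range]
      exact (hstrad t htS).1
    · intro j _ _; exact hv0 j
  have hsum2 : ∑ t ∈ S, v (J t - 1) ≤ V := by
    rw [← Finset.sum_image hinj', hV]
    apply Finset.sum_le_sum_of_subset_of_nonneg
    · intro j hj
      rw [Finset.mem_image] at hj
      obtain ⟨t, htS, rfl⟩ := hj
      rw [Finset.mem_range]
      have := (hstrad t htS).1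
      omega
    · intro j _ _; exact hv0 j
  have habs_sum : ∑ t ∈ Finset.range b, |A t - C t| ≤ 2*V := by
    have h0 : ∑ t ∈ S, |A t - C t| = ∑ t ∈ Finset.range b, |A t - C t| := by
      rw [hS]
      apply Finset.sum_filter_of_ne
      intro t _ hne0 hAC
      exact hne0 (by rw [hAC]; simp)
    rw [← h0]
    have h1 : ∑ t ∈ S, |A t - C t| ≤ ∑ t ∈ S, (v (J t - 1) + v (J t)) := by
      apply Finset.sum_le_sum
      intro t ht
      obtain ⟨_,_,e1,e2,_,_⟩ := hstrad t ht
      rw [e1, e2]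
      have g1 := hv0 (J t - 1); have g2 := hv0 (J t)
      rw [abs_le]; constructor <;> linarith
    rw [Finset.sum_add_distrib] at h1
    linarith
  -- assemble
  have habsnn : (0:ℝ) ≤ ∑ t ∈ Finset.range b, |A t - C t| :=
    Finset.sum_nonneg (fun t _ => abs_nonneg _)
  calc ∑ t ∈ Finset.range b, ∑ n ∈ Finset.Ico (t*w) (t*w+w), (H n - m t)^2
      ≤ ∑ t ∈ Finset.range b, (w:ℝ)*(A t - C t)^2/4 := by
        apply Finset.sum_le_sum
        intro t ht
        exact key t (Finset.mem_range.mp ht)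
    _ = (w:ℝ)/4 * ∑ t ∈ Finset.range b, (A t - C t)^2 := by
        rw [Finset.mul_sum]
        apply Finset.sum_congr rfl
        intro t _; ring
    _ ≤ (w:ℝ)/4 * (∑ t ∈ Finset.range b, |A t - C t|)^2 := by
        apply mul_le_mul_of_nonneg_left _ (by positivity)
        have he : ∑ t ∈ Finset.range b, (A t - C t)^2
            = ∑ t ∈ Finset.range b, |A t - C t|^2 := by
          apply Finset.sum_congr rfl
          intro t _; rw [sq_abs]
        rw [he]
        exact my_sum_sq_le_sq_sum _ _ (fun i _ => abs_nonneg _)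
    _ ≤ (w:ℝ)/4 * (2*V)^2 := by
        apply mul_le_mul_of_nonneg_left _ (by positivity)
        exact pow_le_pow_left₀ habsnn habs_sum 2
    _ = (w:ℝ) * V^2 := by ring
    _ ≤ (w:ℝ) * M^2 / Δ^2 := by
        rw [le_div_iff₀ (by positivity : (0:ℝ) < (Δ:ℝ)^2)]
        have hΔ0 : (0:ℝ) ≤ (Δ:ℝ) := Nat.cast_nonneg _
        have h3 : ((Δ:ℝ)*V)^2 ≤ M^2 := pow_le_pow_left₀ (mul_nonneg hΔ0 hV0) hΔV 2
        have hw0 : (0:ℝ) ≤ (w:ℝ) := Nat.cast_nonneg _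
        nlinarith [h3]

lemma my_umono (u : ℕ → ℕ) (k : ℕ) (hmono : ∀ j < k, u j < u (j+1)) :
    ∀ j' ≤ k, ∀ j ≤ j', u j ≤ u j' := by
  intro j'
  induction j' with
  | zero =>
    intro _ j hj
    have hj0 : j = 0 := by omega
    exact le_of_eq (congrArg u hj0)
  | succ n ih =>
    intro hn j hj
    rcases (by omega : j ≤ n ∨ j = n + 1) with h1 | h1
    · exact le_trans (ih (by omega) j h1) (le_of_lt (hmono n (by omega)))
    · simp [h1]



/-- Exact squared-error bound from the proof of Theorem 1:
`‖h* − h̄‖₂² ≤ (r/b)·M²/Δ²` for block averaging of a nonnegative `k`-piecewise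
constant histogram with mass `M` and minimum piece width `Δ ≥ r/b`. -/
theorem block_average_error_sq (r b k Δ : ℕ) (hb : 0 < b) (hdvd : b ∣ r) (hΔ : 0 < Δ)
    (hbΔ : r / b ≤ Δ) (M : ℝ) (h : Fin r → ℝ) (hpos : ∀ i, 0 ≤ h i)
    (u : ℕ → ℕ) (hu0 : u 0 = 0) (huk : u k = r)
    (hmono : ∀ j < k, u j < u (j + 1))
    (hwidth : ∀ j < k, Δ ≤ u (j + 1) - u j)
    (hconst : ∀ j < k, ∀ i i' : Fin r, u j ≤ (i : ℕ) → (i : ℕ) < u (j + 1) →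
      u j ≤ (i' : ℕ) → (i' : ℕ) < u (j + 1) → h i = h i')
    (hsum : ∑ i, h i = M)
    (hbar : Fin r → ℝ)
    (hbar_def : ∀ i : Fin r, hbar i =
      ((b : ℝ) / r) * ∑ i' ∈ Finset.univ.filter
        (fun i' : Fin r => (i' : ℕ) / (r / b) = (i : ℕ) / (r / b)), h i') :
    (∑ i, (h i - hbar i) ^ 2) ≤ ((r : ℝ) / b) * M ^ 2 / Δ ^ 2 := by
  classical
  rcases Nat.eq_zero_or_pos r with hr0 | hr
  · subst hr0
    simp
  set w := r / b with hwdef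
  have hrw : b * w = r := Nat.mul_div_cancel' hdvd
  have hw : 0 < w := by
    rcases Nat.eq_zero_or_pos w with h1 | h1
    · rw [h1, Nat.mul_zero] at hrw; omega
    · exact h1
  have hk : 0 < k := by
    rcases Nat.eq_zero_or_pos k with h1 | h1
    · exfalso; rw [h1, hu0] at huk; omega
    · exact h1
  set H : ℕ → ℝ := fun n => if hn : n < r then h ⟨n, hn⟩ else 0 with hH
  have hHfin : ∀ i : Fin r, H (i:ℕ) = h i := by
    intro i
    rw [hH]
    simp [i.isLt]
  have Hpos : ∀ n, 0 ≤ H n := by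
    intro n
    rw [hH]
    dsimp only
    split
    · exact hpos _
    · exact le_refl 0
  have hsumH : ∑ n ∈ Finset.range r, H n = M := by
    have h1 : ∑ i : Fin r, H (i:ℕ) = ∑ n ∈ Finset.range r, H n :=
      Fin.sum_univ_eq_sum_range H r
    rw [← h1, ← hsum]
    exact Finset.sum_congr rfl (fun i _ => hHfin i)
  set m : ℕ → ℝ := fun t => (1/(w:ℝ)) * ∑ n ∈ Finset.Ico (t*w) (t*w+w), H n with hmdef
  have hm : ∀ t, (w:ℝ) * m t = ∑ n ∈ Finset.Ico (t*w) (t*w+w), H n := by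
    intro t
    rw [hmdef]
    dsimp only
    rw [← mul_assoc]
    have : (w:ℝ) ≠ 0 := Nat.cast_ne_zero.mpr (by omega)
    field_simp
  have hfilter : ∀ t, t < b →
      ∑ i' ∈ Finset.univ.filter (fun i' : Fin r => (i':ℕ)/w = t), h i'
        = ∑ n ∈ Finset.Ico (t*w) (t*w+w), H n := by
    intro t ht
    have h1 : ∑ i' ∈ Finset.univ.filter (fun i' : Fin r => (i':ℕ)/w = t), h i'
        = ∑ i' : Fin r, (if ((i':ℕ)/w = t) then H (i':ℕ) else 0) := by
      rw [Finset.sum_filter]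
      exact Finset.sum_congr rfl (fun i _ => by rw [hHfin i])
    have h2 : ∑ i' : Fin r, (if ((i':ℕ)/w = t) then H (i':ℕ) else 0)
        = ∑ n ∈ Finset.range r, (if (n/w = t) then H n else 0) :=
      Fin.sum_univ_eq_sum_range (fun n => if n/w = t then H n else 0) r
    have h3 : ∑ n ∈ Finset.range r, (if (n/w = t) then H n else 0)
        = ∑ n ∈ (Finset.range r).filter (fun n => n/w = t), H n :=
      (Finset.sum_filter _ _).symm
    have h4 : (Finset.range r).filter (fun n => n/w = t) = Finset.Ico (t*w) (t*w+w) := by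
      ext n
      simp only [Finset.mem_filter, Finset.mem_range, Finset.mem_Ico]
      rw [my_div_eq_iff w t n hw]
      have hb1 : (t+1)*w ≤ b*w := Nat.mul_le_mul_right w (by omega)
      have hb2 : (t+1)*w = t*w + w := by ring
      constructor
      · rintro ⟨_, hx⟩; exact hx
      · rintro hx; exact ⟨by omega, hx⟩
    rw [h1, h2, h3, h4]
  have hdivlt : ∀ i : Fin r, (i:ℕ)/w < b := by
    intro i
    refine (Nat.div_lt_iff_lt_mul hw).mpr ?_
    have h2 := i.isLt
    omega
  have hbarm : ∀ i : Fin r, hbar i = m ((i:ℕ)/w) := by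
    intro i
    rw [hbar_def i, hmdef]
    dsimp only
    rw [hfilter _ (hdivlt i)]
    have hcast : ((b:ℝ)/(r:ℝ)) = 1/(w:ℝ) := by
      rw [← hrw]
      push_cast
      have hb0 : (b:ℝ) ≠ 0 := Nat.cast_ne_zero.mpr (by omega)
      have hw0 : (w:ℝ) ≠ 0 := Nat.cast_ne_zero.mpr (by omega)
      field_simp
    rw [hcast]
  have hconstH : ∀ j < k, ∀ n n' : ℕ, u j ≤ n → n < u (j+1) → u j ≤ n' → n' < u (j+1) →
      H n = H n' := by
    intro j hj n n' h1 h2 h3 h4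
    have hub : u (j+1) ≤ r := by
      rw [← huk]
      exact my_umono u k hmono k (le_refl k) (j+1) (by omega)
    have hn : n < r := by omega
    have hn' : n' < r := by omega
    rw [hH]
    dsimp only
    rw [dif_pos hn, dif_pos hn']
    exact hconst j hj ⟨n, hn⟩ ⟨n', hn'⟩ h1 h2 h3 h4
  have hLHS : ∑ i, (h i - hbar i)^2
      = ∑ t ∈ Finset.range b, ∑ n ∈ Finset.Ico (t*w) (t*w+w), (H n - m t)^2 := by
    have l1 : ∑ i : Fin r, (h i - hbar i)^2
        = ∑ n ∈ Finset.range r, (H n - m (n/w))^2 := by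
      rw [← Fin.sum_univ_eq_sum_range (fun n => (H n - m (n/w))^2) r]
      exact Finset.sum_congr rfl (fun i _ => by rw [← hHfin i, ← hbarm i])
    have l2 : ∑ n ∈ Finset.range r, (H n - m (n/w))^2
        = ∑ t ∈ Finset.range b, ∑ n ∈ Finset.Ico (t*w) ((t+1)*w), (H n - m (n/w))^2 := by
      have hc := my_sum_consecutive (fun n => (H n - m (n/w))^2) (fun t => t*w)
        (by simp) b (fun j _ => Nat.mul_le_mul_right w (by omega))
      rw [← hrw]
      exact hc
    have l3 : ∀ t ∈ Finset.range b,
        ∑ n ∈ Finset.Ico (t*w) ((t+1)*w), (H n - m (n/w))^2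
          = ∑ n ∈ Finset.Ico (t*w) (t*w+w), (H n - m t)^2 := by
      intro t _
      have he : (t+1)*w = t*w + w := by ring
      rw [he]
      apply Finset.sum_congr rfl
      intro n hn
      rw [Finset.mem_Ico] at hn
      have : n / w = t := (my_div_eq_iff w t n hw).mpr ⟨hn.1, hn.2⟩
      rw [this]
    rw [l1, l2]
    exact Finset.sum_congr rfl l3
  have hRHS : ((r:ℝ)/b)*M^2/Δ^2 = (w:ℝ)*M^2/Δ^2 := by
    have : ((r:ℝ)/b) = (w:ℝ) := by
      rw [← hrw]
      push_cast
      rw [mul_comm]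
      rw [mul_div_assoc]
      rw [div_self (Nat.cast_ne_zero.mpr (by omega : b ≠ 0) : (b:ℝ) ≠ 0), mul_one]
    rw [this]
  rw [hLHS, hRHS]
  exact aux_block_avg w k Δ b hw hΔ hbΔ hk M H Hpos u hu0 (by rw [huk, ← hrw]) hmono
    hwidth hconstH (by rw [hrw]; exact hsumH) m hm
end
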